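/- arXiv:1612.06775 — 9 statements merged into one kernel-verified Lean document; each statement's English description precedes it below -/
import Mathlib

section
/- Suppose d² − 4kρ₂ = 0. If φ = f(t,x) and ψ = g(t,x) solve the nonlinear damped Timoshenko system, then for any real ε the pair φ̃(t,x) = f(t,x) + ε t x, ψ̃(t,x) = g(t,x) + ε(2√(ρ₂/k) − t) is also a solution. -/
/-- Partial derivative in the first (time) variable. -/
noncomputable def pt (f : ℝ → ℝ → ℝ) : ℝ → ℝ → ℝ := fun t x => deriv (fun s => f s x) t

/-- Partial derivative in the second (space) variable. -/
noncomputable def px (f : ℝ → ℝ → ℝ) : ℝ → ℝ → ℝ := fun t x => deriv (fun y => f t y) x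

/-- The nonlinear damped Timoshenko system:
`ρ₁ φ_tt − k(φ_xx + ψ_x) = 0` and `ρ₂ ψ_tt − χ'(ψ_x)·ψ_xx + k(φ_x + ψ) + d ψ_t = 0`. -/
noncomputable def TimoshenkoSol (ρ₁ ρ₂ k d : ℝ) (χ : ℝ → ℝ) (φ ψ : ℝ → ℝ → ℝ) : Prop :=
  ∀ t x : ℝ,
    ρ₁ * pt (pt φ) t x - k * (px (px φ) t x + px ψ t x) = 0 ∧
    ρ₂ * pt (pt ψ) t x - deriv χ (px ψ t x) * px (px ψ) t x
      + k * (px φ t x + ψ t x) + d * pt ψ t x = 0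

lemma diff_slice_t {f : ℝ → ℝ → ℝ} (hf : ContDiff ℝ (⊤ : ℕ∞) (fun p : ℝ × ℝ => f p.1 p.2))
    (x : ℝ) : Differentiable ℝ (fun s => f s x) :=
  (hf.comp (contDiff_id.prodMk contDiff_const)).differentiable (by simp)

lemma diff_slice_x {f : ℝ → ℝ → ℝ} (hf : ContDiff ℝ (⊤ : ℕ∞) (fun p : ℝ × ℝ => f p.1 p.2))
    (t : ℝ) : Differentiable ℝ (fun y => f t y) :=
  (hf.comp (contDiff_const.prodMk contDiff_id)).differentiable (by simp)

theorem timoshenko_X6_invariance_critical_damping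
    (ρ₁ ρ₂ k d : ℝ) (hρ₁ : 0 < ρ₁) (hρ₂ : 0 < ρ₂) (hk : 0 < k) (hd : 0 < d)
    (hcrit : d ^ 2 = 4 * k * ρ₂)
    (χ : ℝ → ℝ) (hχ : ContDiff ℝ (⊤ : ℕ∞) χ)
    (f g : ℝ → ℝ → ℝ)
    (hf : ContDiff ℝ (⊤ : ℕ∞) (fun p : ℝ × ℝ => f p.1 p.2))
    (hg : ContDiff ℝ (⊤ : ℕ∞) (fun p : ℝ × ℝ => g p.1 p.2))
    (hsol : TimoshenkoSol ρ₁ ρ₂ k d χ f g) (ε : ℝ) :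
    TimoshenkoSol ρ₁ ρ₂ k d χ
      (fun t x => f t x + ε * t * x)
      (fun t x => g t x + ε * (2 * Real.sqrt (ρ₂ / k) - t)) := by
  set S := Real.sqrt (ρ₂ / k) with hS
  have hkey : 2 * k * S = d := by
    have h1 : (2 * k * S) ^ 2 = d ^ 2 := by
      have hs : S ^ 2 = ρ₂ / k := Real.sq_sqrt (div_nonneg hρ₂.le hk.le)
      rw [hcrit]
      field_simp [hk.ne'] at hs ⊢
      nlinarith [hs]
    have h2 : 0 ≤ 2 * k * S := by positivity
    nlinarith [h1, h2, hd.le]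
  intro t x
  -- compute all partial derivatives of the shifted functions
  have hptφ : ∀ t x : ℝ, pt (fun t x => f t x + ε * t * x) t x = pt f t x + ε * x := by
    intro t x
    simp only [pt]
    rw [deriv_fun_add (diff_slice_t hf x t) (by fun_prop)]
    have h : deriv (fun s : ℝ => ε * s * x) t = ε * x := by
      rw [show (fun s : ℝ => ε * s * x) = fun s => (ε * x) * s from by funext s; ring,
        deriv_const_mul_field]
      simp
    rw [h]
  have hpxφ : ∀ t x : ℝ, px (fun t x => f t x + ε * t * x) t x = px f t x + ε * t := by
    intro t x
    simp only [px]
    rw [deriv_fun_add (diff_slice_x hf t x) (by fun_prop)]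
    rw [deriv_const_mul_field]
    simp
  have hpttφ : pt (pt (fun t x => f t x + ε * t * x)) t x = pt (pt f) t x := by
    simp only [pt]
    rw [show (fun s => deriv (fun s' => f s' x + ε * s' * x) s)
        = fun s => (fun s => pt f s x) s + ε * x from funext fun s => hptφ s x]
    exact deriv_add_const _
  have hpxxφ : px (px (fun t x => f t x + ε * t * x)) t x = px (px f) t x := by
    simp only [px]
    rw [show (fun y => deriv (fun y' => f t y' + ε * t * y') y)
        = fun y => (fun y => px f t y) y + ε * t from funext fun y => hpxφ t y]
    exact deriv_add_const _
  have hpxψ : ∀ t x : ℝ, px (fun t x => g t x + ε * (2 * S - t)) t x = px g t x := by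
    intro t x
    simp only [px]
    exact deriv_add_const _
  have hpxxψ : px (px (fun t x => g t x + ε * (2 * S - t))) t x = px (px g) t x := by
    simp only [px]
    rw [show (fun y => deriv (fun y' => g t y' + ε * (2 * S - t)) y)
        = fun y => px g t y from funext fun y => hpxψ t y]
    rfl
  have hptψ : ∀ t x : ℝ, pt (fun t x => g t x + ε * (2 * S - t)) t x = pt g t x - ε := by
    intro t x
    simp only [pt]
    rw [deriv_fun_add (diff_slice_t hg x t) (by fun_prop)]
    have : deriv (fun s => ε * (2 * S - s)) t = -ε := by
      have : (fun s : ℝ => ε * (2 * S - s)) = fun s => ε * (2 * S) - ε * s := by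
        funext s; ring
      rw [this, deriv_const_sub, deriv_const_mul _ differentiableAt_fun_id]
      simp
    rw [this]; ring
  have hpttψ : pt (pt (fun t x => g t x + ε * (2 * S - t))) t x = pt (pt g) t x := by
    simp only [pt]
    rw [show (fun s => deriv (fun s' => g s' x + ε * (2 * S - s')) s)
        = fun s => (fun s => pt g s x) s + (-ε) from funext fun s => by
          have h := hptψ s x; simp only [pt] at h ⊢; rw [h]; ring]
    exact deriv_add_const _
  obtain ⟨h1, h2⟩ := hsol t x
  constructor
  · rw [hpttφ, hpxxφ, hpxψ]
    linarith
  · rw [hpttψ, hpxψ, hpxxψ, hpxφ, hptψ]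
    linear_combination h2 + ε * hkey
end

section
/- Suppose d² − 4kρ₂ = 0. If φ = f(t,x) and ψ = g(t,x) solve the nonlinear damped Timoshenko system, then for any real ε₇, ε₈ the pair φ̃ = f, ψ̃(t,x) = g(t,x) + (ε₇ + ε₈ t) e^{−√(k/ρ₂) t} is also a solution. -/
lemma hasDerivAt_aux (ω a b t : ℝ) :
    HasDerivAt (fun s => (a + b * s) * Real.exp (-ω * s))
      ((a * (-ω) + b + b * (-ω) * t) * Real.exp (-ω * t)) t := by
  have he : HasDerivAt (fun s : ℝ => Real.exp (-ω * s)) (-ω * Real.exp (-ω * t)) t := by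
    have := (Real.hasDerivAt_exp (-ω * t)).comp t ((hasDerivAt_id t).const_mul (-ω))
    simpa [Function.comp_def, mul_comm] using this
  have hl : HasDerivAt (fun s : ℝ => a + b * s) b t := by
    simpa using ((hasDerivAt_id t).const_mul b).const_add a
  have : HasDerivAt (fun s => (a + b * s) * Real.exp (-ω * s))
      (b * Real.exp (-ω * t) + (a + b * t) * (-ω * Real.exp (-ω * t))) t := hl.mul he
  convert this using 1
  ring

theorem timoshenko_X7_X8_invariance_critical_damping
    (ρ₁ ρ₂ k d : ℝ) (hρ₁ : 0 < ρ₁) (hρ₂ : 0 < ρ₂) (hk : 0 < k) (hd : 0 < d)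
    (hcrit : d ^ 2 = 4 * k * ρ₂)
    (χ : ℝ → ℝ) (hχ : ContDiff ℝ (⊤ : ℕ∞) χ)
    (f g : ℝ → ℝ → ℝ)
    (hf : ContDiff ℝ (⊤ : ℕ∞) (fun p : ℝ × ℝ => f p.1 p.2))
    (hg : ContDiff ℝ (⊤ : ℕ∞) (fun p : ℝ × ℝ => g p.1 p.2))
    (hsol : TimoshenkoSol ρ₁ ρ₂ k d χ f g) (ε₇ ε₈ : ℝ) :
    TimoshenkoSol ρ₁ ρ₂ k d χ f
      (fun t x => g t x + (ε₇ + ε₈ * t) * Real.exp (-Real.sqrt (k / ρ₂) * t)) := by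
  set ω := Real.sqrt (k / ρ₂) with hω
  set ψ : ℝ → ℝ → ℝ := fun t x => g t x + (ε₇ + ε₈ * t) * Real.exp (-ω * t) with hψ
  -- basic constants
  have hω2 : ρ₂ * ω ^ 2 = k := by
    have : ω ^ 2 = k / ρ₂ := Real.sq_sqrt (by positivity)
    rw [this]; field_simp
  have hωpos : 0 < ω := Real.sqrt_pos.mpr (by positivity)
  have hd2 : d = 2 * ρ₂ * ω := by
    nlinarith [sq_nonneg (d - 2 * ρ₂ * ω), sq_nonneg (d + 2 * ρ₂ * ω),
      mul_pos hρ₂ hωpos]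
  -- smoothness of time slices of g
  have hgx : ∀ x : ℝ, ContDiff ℝ (⊤ : ℕ∞) (fun s => g s x) := fun x =>
    hg.comp (contDiff_id.prodMk contDiff_const)
  have hgxi : ∀ x : ℝ, ContDiff ℝ ((⊤ : ℕ∞) : WithTop ℕ∞) (fun s => g s x) := fun x =>
    (hgx x).of_le (by simp)
  have hgxd : ∀ x : ℝ, Differentiable ℝ (fun s => g s x) := fun x =>
    (contDiff_infty_iff_deriv.mp (hgxi x)).1
  have hgxd' : ∀ x : ℝ, Differentiable ℝ (deriv (fun s => g s x)) := fun x =>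
    (contDiff_infty_iff_deriv.mp (contDiff_infty_iff_deriv.mp (hgxi x)).2).1
  -- space derivatives of ψ coincide with those of g
  have hpx : ∀ t x : ℝ, px ψ t x = px g t x := by
    intro t x
    simp only [px, hψ, deriv_add_const]
  have hpxx : ∀ t x : ℝ, px (px ψ) t x = px (px g) t x := by
    intro t x
    simp only [px]
    congr 1
    funext y
    exact hpx t y
  -- time derivatives of ψ
  have hpt : ∀ t x : ℝ, pt ψ t x = pt g t x
      + (ε₇ * (-ω) + ε₈ + ε₈ * (-ω) * t) * Real.exp (-ω * t) := by
    intro t x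
    have := ((hgxd x t).hasDerivAt.fun_add (hasDerivAt_aux ω ε₇ ε₈ t)).deriv
    simpa [pt, hψ] using this
  have hptt : ∀ t x : ℝ, pt (pt ψ) t x = pt (pt g) t x
      + ((ε₇ * (-ω) + ε₈) * (-ω) + ε₈ * (-ω) + ε₈ * (-ω) * (-ω) * t)
        * Real.exp (-ω * t) := by
    intro t x
    have heq : (fun s => pt ψ s x) = fun s => pt g s x
        + (ε₇ * (-ω) + ε₈ + ε₈ * (-ω) * s) * Real.exp (-ω * s) := by
      funext s; exact hpt s x
    have hD : HasDerivAt (fun s => (ε₇ * (-ω) + ε₈ + ε₈ * (-ω) * s) * Real.exp (-ω * s))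
        (((ε₇ * (-ω) + ε₈) * (-ω) + ε₈ * (-ω) + ε₈ * (-ω) * (-ω) * t)
          * Real.exp (-ω * t)) t := hasDerivAt_aux ω (ε₇ * (-ω) + ε₈) (ε₈ * (-ω)) t
    simp only [pt] at heq ⊢
    rw [heq]
    simpa using (((hgxd' x) t).hasDerivAt.fun_add hD).deriv
  intro t x
  obtain ⟨h1, h2⟩ := hsol t x
  constructor
  · rw [hpx]; exact h1
  · rw [hpx, hpxx, hpt, hptt]
    have haux : ρ₂ * (((ε₇ * (-ω) + ε₈) * (-ω) + ε₈ * (-ω) + ε₈ * (-ω) * (-ω) * t)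
          * Real.exp (-ω * t))
        + k * ((ε₇ + ε₈ * t) * Real.exp (-ω * t))
        + d * ((ε₇ * (-ω) + ε₈ + ε₈ * (-ω) * t) * Real.exp (-ω * t)) = 0 := by
      rw [hd2, ← hω2]; ring
    have hψval : ψ t x = g t x + (ε₇ + ε₈ * t) * Real.exp (-ω * t) := rfl
    rw [hψval]
    linear_combination h2 + haux
end

section
/- Suppose d² − 4kρ₂ = 0. If φ = f(t,x) and ψ = g(t,x) is a solution of the nonlinear damped Timoshenko system, then for all real ε₁,…,ε₈, the pair φ̃(t,x) = f(t+ε₁, x+ε₂) + ε₃ + ε₄(t+ε₁) + ε₅(x+ε₂) + ε₆(t+ε₁)(x+ε₂) and ψ̃(t,x) = g(t+ε₁, x+ε₂) + 2√(ρ₂/k) ε₆ − ε₆(t+ε₁) − ε₅ + (ε₇ + ε₈(t+ε₁)) e^{−√(k/ρ₂)(t+ε₁)} is also a solution. -/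
lemma sliceT {f : ℝ → ℝ → ℝ} (hf : ContDiff ℝ (⊤ : ℕ∞) (fun p : ℝ × ℝ => f p.1 p.2)) (x : ℝ) :
    ContDiff ℝ (⊤ : ℕ∞) (fun t => f t x) := hf.comp (contDiff_id.prodMk contDiff_const)

lemma sliceX {f : ℝ → ℝ → ℝ} (hf : ContDiff ℝ (⊤ : ℕ∞) (fun p : ℝ × ℝ => f p.1 p.2)) (t : ℝ) :
    ContDiff ℝ (⊤ : ℕ∞) (fun y => f t y) := hf.comp (contDiff_const.prodMk contDiff_id)

lemma pt_eq_fderiv {f : ℝ → ℝ → ℝ} (hf : ContDiff ℝ (⊤ : ℕ∞) (fun p : ℝ × ℝ => f p.1 p.2))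
    (t x : ℝ) : pt f t x = fderiv ℝ (fun p : ℝ × ℝ => f p.1 p.2) (t, x) (1, 0) := by
  have hL : HasFDerivAt (fun s : ℝ => (s, x)) ((ContinuousLinearMap.id ℝ ℝ).prod 0) t :=
    (hasFDerivAt_id t).prodMk (hasFDerivAt_const x t)
  have hF := (hf.differentiable (by simp) (t, x)).hasFDerivAt
  have hc := hF.comp t hL
  have hd : HasDerivAt (fun s => f s x)
      (((fderiv ℝ (fun p : ℝ × ℝ => f p.1 p.2) (t, x)).comp
        ((ContinuousLinearMap.id ℝ ℝ).prod 0)) 1) t := hc.hasDerivAt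
  rw [show pt f t x = deriv (fun s => f s x) t from rfl, hd.deriv]
  simp

lemma px_eq_fderiv {f : ℝ → ℝ → ℝ} (hf : ContDiff ℝ (⊤ : ℕ∞) (fun p : ℝ × ℝ => f p.1 p.2))
    (t x : ℝ) : px f t x = fderiv ℝ (fun p : ℝ × ℝ => f p.1 p.2) (t, x) (0, 1) := by
  have hL : HasFDerivAt (fun y : ℝ => (t, y))
      ((0 : ℝ →L[ℝ] ℝ).prod (ContinuousLinearMap.id ℝ ℝ)) x :=
    (hasFDerivAt_const t x).prodMk (hasFDerivAt_id x)
  have hF := (hf.differentiable (by simp) (t, x)).hasFDerivAt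
  have hc := hF.comp x hL
  have hd : HasDerivAt (fun y => f t y)
      (((fderiv ℝ (fun p : ℝ × ℝ => f p.1 p.2) (t, x)).comp
        ((0 : ℝ →L[ℝ] ℝ).prod (ContinuousLinearMap.id ℝ ℝ))) 1) x := hc.hasDerivAt
  rw [show px f t x = deriv (fun y => f t y) x from rfl, hd.deriv]
  simp

lemma contDiff_pt {f : ℝ → ℝ → ℝ} (hf : ContDiff ℝ (⊤ : ℕ∞) (fun p : ℝ × ℝ => f p.1 p.2)) :
    ContDiff ℝ (⊤ : ℕ∞) (fun p : ℝ × ℝ => pt f p.1 p.2) := by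
  have h : (fun p : ℝ × ℝ => pt f p.1 p.2)
      = fun p : ℝ × ℝ => fderiv ℝ (fun q : ℝ × ℝ => f q.1 q.2) p ((1 : ℝ), (0 : ℝ)) := by
    funext p
    exact pt_eq_fderiv hf p.1 p.2
  rw [h]
  exact (hf.fderiv_right (by simp)).clm_apply contDiff_const

lemma hasDerivAt_sliceT {f : ℝ → ℝ → ℝ} (hf : ContDiff ℝ (⊤ : ℕ∞) (fun p : ℝ × ℝ => f p.1 p.2))
    (t x : ℝ) : HasDerivAt (fun s => f s x) (pt f t x) t :=
  (((sliceT hf x).differentiable (by simp)) t).hasDerivAt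

lemma hasDerivAt_sliceX {f : ℝ → ℝ → ℝ} (hf : ContDiff ℝ (⊤ : ℕ∞) (fun p : ℝ × ℝ => f p.1 p.2))
    (t x : ℝ) : HasDerivAt (fun y => f t y) (px f t x) x :=
  (((sliceX hf t).differentiable (by simp)) x).hasDerivAt

lemma hasDerivAt_comp_shift {F : ℝ → ℝ} {D : ℝ} {s a : ℝ} (h : HasDerivAt F D (s + a)) :
    HasDerivAt (fun u => F (u + a)) D s := by
  have h2 := h.comp s ((hasDerivAt_id s).add_const a)
  simpa [Function.comp_def] using h2

theorem timoshenko_eight_parameter_group_critical_damping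
    (ρ₁ ρ₂ k d : ℝ) (hρ₁ : 0 < ρ₁) (hρ₂ : 0 < ρ₂) (hk : 0 < k) (hd : 0 < d)
    (hcrit : d ^ 2 = 4 * k * ρ₂)
    (χ : ℝ → ℝ) (hχ : ContDiff ℝ (⊤ : ℕ∞) χ)
    (f g : ℝ → ℝ → ℝ)
    (hf : ContDiff ℝ (⊤ : ℕ∞) (fun p : ℝ × ℝ => f p.1 p.2))
    (hg : ContDiff ℝ (⊤ : ℕ∞) (fun p : ℝ × ℝ => g p.1 p.2))
    (hsol : TimoshenkoSol ρ₁ ρ₂ k d χ f g)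
    (ε₁ ε₂ ε₃ ε₄ ε₅ ε₆ ε₇ ε₈ : ℝ) :
    TimoshenkoSol ρ₁ ρ₂ k d χ
      (fun t x => f (t + ε₁) (x + ε₂) + ε₃ + ε₄ * (t + ε₁) + ε₅ * (x + ε₂)
        + ε₆ * (t + ε₁) * (x + ε₂))
      (fun t x => g (t + ε₁) (x + ε₂) + 2 * Real.sqrt (ρ₂ / k) * ε₆
        - ε₆ * (t + ε₁) - ε₅
        + (ε₇ + ε₈ * (t + ε₁)) * Real.exp (-Real.sqrt (k / ρ₂) * (t + ε₁))) := by
  intro t x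
  set μ := Real.sqrt (k / ρ₂) with hμdef
  set ν := Real.sqrt (ρ₂ / k) with hνdef
  have hμpos : 0 < μ := Real.sqrt_pos.mpr (div_pos hk hρ₂)
  have hμ2 : ρ₂ * μ ^ 2 = k := by
    rw [hμdef, Real.sq_sqrt (div_pos hk hρ₂).le]
    field_simp
  have hμν : μ * ν = 1 := by
    rw [hμdef, hνdef, ← Real.sqrt_mul (div_pos hk hρ₂).le,
      show k / ρ₂ * (ρ₂ / k) = 1 by field_simp]
    exact Real.sqrt_one
  have hdq : (d - 2 * ρ₂ * μ) * (d + 2 * ρ₂ * μ) = 0 := by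
    linear_combination hcrit - 4 * ρ₂ * hμ2
  have hd2 : d = 2 * ρ₂ * μ := by
    rcases mul_eq_zero.1 hdq with h | h
    · linarith
    · nlinarith [mul_pos hρ₂ hμpos]
  set Φ : ℝ → ℝ → ℝ := fun t x => f (t + ε₁) (x + ε₂) + ε₃ + ε₄ * (t + ε₁) + ε₅ * (x + ε₂)
        + ε₆ * (t + ε₁) * (x + ε₂) with hΦdef
  set Ψ : ℝ → ℝ → ℝ := fun t x => g (t + ε₁) (x + ε₂) + 2 * ν * ε₆
        - ε₆ * (t + ε₁) - ε₅
        + (ε₇ + ε₈ * (t + ε₁)) * Real.exp (-μ * (t + ε₁)) with hΨdef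
  -- partial t of Φ
  have hΦt : pt Φ = fun s y => pt f (s + ε₁) (y + ε₂) + ε₄ + ε₆ * (y + ε₂) := by
    funext s y
    have h1 : HasDerivAt (fun u : ℝ => f (u + ε₁) (y + ε₂)) (pt f (s + ε₁) (y + ε₂)) s :=
      hasDerivAt_comp_shift (hasDerivAt_sliceT hf (s + ε₁) (y + ε₂))
    have h2 : HasDerivAt (fun u : ℝ => ε₄ * (u + ε₁)) (ε₄ * 1) s :=
      ((hasDerivAt_id s).add_const ε₁).const_mul ε₄
    have h3 : HasDerivAt (fun u : ℝ => ε₆ * (u + ε₁) * (y + ε₂)) (ε₆ * 1 * (y + ε₂)) s :=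
      (((hasDerivAt_id s).add_const ε₁).const_mul ε₆).mul_const (y + ε₂)
    have H := (((h1.add_const ε₃).add h2).add_const (ε₅ * (y + ε₂))).add h3
    show deriv (fun u : ℝ => f (u + ε₁) (y + ε₂) + ε₃ + ε₄ * (u + ε₁) + ε₅ * (y + ε₂)
        + ε₆ * (u + ε₁) * (y + ε₂)) s = _
    exact H.deriv.trans (by ring)
  have hΦtt : pt (pt Φ) t x = pt (pt f) (t + ε₁) (x + ε₂) := by
    show deriv (fun s => pt Φ s x) t = deriv (fun s => pt f s (x + ε₂)) (t + ε₁)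
    simp only [hΦt]
    rw [deriv_add_const, deriv_add_const]
    exact deriv_comp_add_const (fun u => pt f u (x + ε₂)) ε₁ t
  -- partial x of Φ
  have hΦx : px Φ = fun s y => px f (s + ε₁) (y + ε₂) + ε₅ + ε₆ * (s + ε₁) := by
    funext s y
    have h1 : HasDerivAt (fun u : ℝ => f (s + ε₁) (u + ε₂)) (px f (s + ε₁) (y + ε₂)) y :=
      hasDerivAt_comp_shift (hasDerivAt_sliceX hf (s + ε₁) (y + ε₂))
    have h2 : HasDerivAt (fun u : ℝ => ε₅ * (u + ε₂)) (ε₅ * 1) y :=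
      ((hasDerivAt_id y).add_const ε₂).const_mul ε₅
    have h3 : HasDerivAt (fun u : ℝ => ε₆ * (s + ε₁) * (u + ε₂)) (ε₆ * (s + ε₁) * 1) y :=
      ((hasDerivAt_id y).add_const ε₂).const_mul (ε₆ * (s + ε₁))
    have H := (((h1.add_const ε₃).add_const (ε₄ * (s + ε₁))).add h2).add h3
    show deriv (fun u : ℝ => f (s + ε₁) (u + ε₂) + ε₃ + ε₄ * (s + ε₁) + ε₅ * (u + ε₂)
        + ε₆ * (s + ε₁) * (u + ε₂)) y = _
    exact H.deriv.trans (by ring)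
  have hΦxx : px (px Φ) t x = px (px f) (t + ε₁) (x + ε₂) := by
    show deriv (fun u => px Φ t u) x = deriv (fun u => px f (t + ε₁) u) (x + ε₂)
    simp only [hΦx]
    rw [deriv_add_const, deriv_add_const, deriv_comp_add_const]
  -- partial x of Ψ
  have hΨx : px Ψ = fun s y => px g (s + ε₁) (y + ε₂) := by
    funext s y
    show deriv (fun u : ℝ => g (s + ε₁) (u + ε₂) + 2 * ν * ε₆ - ε₆ * (s + ε₁) - ε₅
        + (ε₇ + ε₈ * (s + ε₁)) * Real.exp (-μ * (s + ε₁))) y = _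
    rw [deriv_add_const, deriv_sub_const, deriv_sub_const, deriv_add_const,
      deriv_comp_add_const]
    rfl
  have hΨxx : px (px Ψ) t x = px (px g) (t + ε₁) (x + ε₂) := by
    show deriv (fun u => px Ψ t u) x = deriv (fun u => px g (t + ε₁) u) (x + ε₂)
    simp only [hΨx]
    rw [deriv_comp_add_const]
  -- partial t of Ψ
  have hΨt : pt Ψ = fun s y => pt g (s + ε₁) (y + ε₂) - ε₆
      + (ε₈ - μ * (ε₇ + ε₈ * (s + ε₁))) * Real.exp (-μ * (s + ε₁)) := by
    funext s y
    have h1 : HasDerivAt (fun u : ℝ => g (u + ε₁) (y + ε₂)) (pt g (s + ε₁) (y + ε₂)) s :=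
      hasDerivAt_comp_shift (hasDerivAt_sliceT hg (s + ε₁) (y + ε₂))
    have h3 : HasDerivAt (fun u : ℝ => ε₆ * (u + ε₁)) (ε₆ * 1) s :=
      ((hasDerivAt_id s).add_const ε₁).const_mul ε₆
    have ha : HasDerivAt (fun u : ℝ => ε₇ + ε₈ * (u + ε₁)) (ε₈ * 1) s :=
      (((hasDerivAt_id s).add_const ε₁).const_mul ε₈).const_add ε₇
    have hbin : HasDerivAt (fun u : ℝ => -μ * (u + ε₁)) (-μ * 1) s :=
      ((hasDerivAt_id s).add_const ε₁).const_mul (-μ)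
    have hb : HasDerivAt (fun u : ℝ => Real.exp (-μ * (u + ε₁)))
        (Real.exp (-μ * (s + ε₁)) * (-μ * 1)) s := (Real.hasDerivAt_exp _).comp s hbin
    have H := (((h1.add_const (2 * ν * ε₆)).sub h3).sub_const ε₅).add (ha.mul hb)
    show deriv (fun u : ℝ => g (u + ε₁) (y + ε₂) + 2 * ν * ε₆ - ε₆ * (u + ε₁) - ε₅
        + (ε₇ + ε₈ * (u + ε₁)) * Real.exp (-μ * (u + ε₁))) s = _
    exact H.deriv.trans (by ring)
  have hΨtt : pt (pt Ψ) t x = pt (pt g) (t + ε₁) (x + ε₂)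
      + (μ ^ 2 * (ε₇ + ε₈ * (t + ε₁)) - 2 * μ * ε₈) * Real.exp (-μ * (t + ε₁)) := by
    show deriv (fun s => pt Ψ s x) t = _
    simp only [hΨt]
    have q1 : HasDerivAt (fun s : ℝ => pt g (s + ε₁) (x + ε₂))
        (pt (pt g) (t + ε₁) (x + ε₂)) t :=
      hasDerivAt_comp_shift (hasDerivAt_sliceT (contDiff_pt hg) (t + ε₁) (x + ε₂))
    have ha : HasDerivAt (fun s : ℝ => ε₈ - μ * (ε₇ + ε₈ * (s + ε₁))) (-(μ * (ε₈ * 1))) t :=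
      (((((hasDerivAt_id t).add_const ε₁).const_mul ε₈).const_add ε₇).const_mul μ).const_sub ε₈
    have hb : HasDerivAt (fun s : ℝ => Real.exp (-μ * (s + ε₁)))
        (Real.exp (-μ * (t + ε₁)) * (-μ * 1)) t :=
      (Real.hasDerivAt_exp _).comp t (((hasDerivAt_id t).add_const ε₁).const_mul (-μ))
    have H := (q1.sub_const ε₆).add (ha.mul hb)
    exact H.deriv.trans (by ring)
  refine ⟨?_, ?_⟩
  · rw [hΦtt, hΦxx]
    simp only [hΨx]
    exact (hsol (t + ε₁) (x + ε₂)).1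
  · have hs2 := (hsol (t + ε₁) (x + ε₂)).2
    have key : ρ₂ * ((μ ^ 2 * (ε₇ + ε₈ * (t + ε₁)) - 2 * μ * ε₈) * Real.exp (-μ * (t + ε₁)))
        + k * (2 * ν * ε₆ + (ε₇ + ε₈ * (t + ε₁)) * Real.exp (-μ * (t + ε₁)))
        - d * ε₆
        + d * ((ε₈ - μ * (ε₇ + ε₈ * (t + ε₁))) * Real.exp (-μ * (t + ε₁))) = 0 := by
      rw [hd2, ← hμ2]
      linear_combination (2 * ρ₂ * μ * ε₆) * hμν
    rw [hΨtt, hΨxx]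
    simp only [hΨx, hΦx, hΨt]
    simp only [hΨdef]
    linear_combination hs2 + key
end

section
/- Suppose d² − 4kρ₂ = λ² with λ > 0. If φ = f(t,x) and ψ = g(t,x) solve the nonlinear damped Timoshenko system, then for any real ε₇, ε₈ the pair φ̃ = f, ψ̃(t,x) = g(t,x) + e^{−dt/(2ρ₂)} (ε₇ cosh(λt/(2ρ₂)) + ε₈ sinh(λt/(2ρ₂))) is also a solution. -/
private lemma expDeriv (r : ℝ) (t : ℝ) :
    HasDerivAt (fun s : ℝ => Real.exp (r * s)) (r * Real.exp (r * t)) t := by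
  simpa [Function.comp_def, mul_comm] using (Real.hasDerivAt_exp (r * t)).comp t ((hasDerivAt_id t).const_mul r)

theorem timoshenko_X7_X8_invariance_overdamped
    (ρ₁ ρ₂ k d lam : ℝ) (hρ₁ : 0 < ρ₁) (hρ₂ : 0 < ρ₂) (hk : 0 < k) (hd : 0 < d)
    (hlam : 0 < lam) (hover : d ^ 2 - 4 * k * ρ₂ = lam ^ 2)
    (χ : ℝ → ℝ) (hχ : ContDiff ℝ (⊤ : ℕ∞) χ)
    (f g : ℝ → ℝ → ℝ)
    (hf : ContDiff ℝ (⊤ : ℕ∞) (fun p : ℝ × ℝ => f p.1 p.2))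
    (hg : ContDiff ℝ (⊤ : ℕ∞) (fun p : ℝ × ℝ => g p.1 p.2))
    (hsol : TimoshenkoSol ρ₁ ρ₂ k d χ f g) (ε₇ ε₈ : ℝ) :
    TimoshenkoSol ρ₁ ρ₂ k d χ f
      (fun t x => g t x + Real.exp (-(d * t) / (2 * ρ₂)) *
        (ε₇ * Real.cosh (lam * t / (2 * ρ₂)) + ε₈ * Real.sinh (lam * t / (2 * ρ₂)))) := by
  have hρ₂' : (2 : ℝ) * ρ₂ ≠ 0 := by positivity
  set A : ℝ := (ε₇ + ε₈) / 2 with hA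
  set B : ℝ := (ε₇ - ε₈) / 2 with hB
  set r₁ : ℝ := (-d + lam) / (2 * ρ₂) with hr₁
  set r₂ : ℝ := (-d - lam) / (2 * ρ₂) with hr₂
  set h : ℝ → ℝ := fun t => A * Real.exp (r₁ * t) + B * Real.exp (r₂ * t) with hh
  set h1 : ℝ → ℝ := fun t => A * (r₁ * Real.exp (r₁ * t)) + B * (r₂ * Real.exp (r₂ * t)) with hh1
  set h2 : ℝ → ℝ :=
    fun t => A * (r₁ * (r₁ * Real.exp (r₁ * t))) + B * (r₂ * (r₂ * Real.exp (r₂ * t))) with hh2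
  -- rewrite the perturbation in exponential form
  have hkey : (fun t x => g t x + Real.exp (-(d * t) / (2 * ρ₂)) *
        (ε₇ * Real.cosh (lam * t / (2 * ρ₂)) + ε₈ * Real.sinh (lam * t / (2 * ρ₂))))
      = fun t x => g t x + h t := by
    funext t x
    have e1 : r₁ * t = -(d * t) / (2 * ρ₂) + lam * t / (2 * ρ₂) := by
      rw [hr₁]; ring
    have e2 : r₂ * t = -(d * t) / (2 * ρ₂) + -(lam * t / (2 * ρ₂)) := by
      rw [hr₂]; ring
    simp only [hh, Real.cosh_eq, Real.sinh_eq, e1, e2, Real.exp_add, hA, hB]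
    ring
  rw [hkey]
  -- derivatives of h
  have hD1 : ∀ t, HasDerivAt h (h1 t) t := by
    intro t
    exact ((expDeriv r₁ t).const_mul A).add ((expDeriv r₂ t).const_mul B)
  have hD2 : ∀ t, HasDerivAt h1 (h2 t) t := by
    intro t
    simpa [hh1, hh2, mul_assoc] using
      (((expDeriv r₁ t).const_mul r₁).const_mul A).fun_add
        (((expDeriv r₂ t).const_mul r₂).const_mul B)
  -- the ODE satisfied by h
  have hroot : ∀ r : ℝ, r = r₁ ∨ r = r₂ → ρ₂ * r ^ 2 + d * r + k = 0 := by
    rintro r (rfl | rfl)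
    · rw [hr₁]; field_simp; nlinarith [hover]
    · rw [hr₂]; field_simp; nlinarith [hover]
  have hODE : ∀ t, ρ₂ * h2 t + k * h t + d * h1 t = 0 := by
    intro t
    have h1' := hroot r₁ (Or.inl rfl)
    have h2' := hroot r₂ (Or.inr rfl)
    simp only [hh, hh1, hh2]
    linear_combination (A * Real.exp (r₁ * t)) * h1' + (B * Real.exp (r₂ * t)) * h2'
  -- smoothness of time sections of g
  have hgx : ∀ x : ℝ, ContDiff ℝ (⊤ : ℕ∞) fun s => g s x := fun x =>
    (hg.of_le (by simp)).comp (contDiff_id.prodMk contDiff_const)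
  have hgx' : ∀ x : ℝ, Differentiable ℝ fun s => g s x := fun x =>
    (hgx x).differentiable (by simp)
  have hgx'' : ∀ x : ℝ, Differentiable ℝ (deriv fun s => g s x) := fun x => by
    have := (hgx x).iterate_deriv 1
    simpa using this.differentiable (by simp)
  -- compute the partial derivatives of the perturbed ψ
  have e_px : ∀ t x, px (fun t x => g t x + h t) t x = px g t x := by
    intro t x; simp only [px]; exact deriv_add_const _
  have e_pxx : ∀ t x, px (px (fun t x => g t x + h t)) t x = px (px g) t x := by
    intro t x
    simp only [px]
    congr 1
    funext y
    exact deriv_add_const _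
  have e_pt : ∀ t x, pt (fun t x => g t x + h t) t x = pt g t x + h1 t := by
    intro t x
    simp only [pt]
    rw [deriv_fun_add (hgx' x t) (hD1 t).differentiableAt, (hD1 t).deriv]
  have e_ptt : ∀ t x, pt (pt (fun t x => g t x + h t)) t x = pt (pt g) t x + h2 t := by
    intro t x
    simp only [pt]
    have : (fun s => deriv (fun u => g u x + h u) s)
        = fun s => deriv (fun u => g u x) s + h1 s := by
      funext s
      rw [deriv_fun_add (hgx' x s) (hD1 s).differentiableAt, (hD1 s).deriv]
    rw [this, deriv_fun_add (hgx'' x t) (hD2 t).differentiableAt, (hD2 t).deriv]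
  intro t x
  obtain ⟨hsol1, hsol2⟩ := hsol t x
  constructor
  · rw [e_px]; exact hsol1
  · rw [e_px, e_pxx, e_pt, e_ptt]
    have hode := hODE t
    show ρ₂ * (pt (pt g) t x + h2 t) - deriv χ (px g t x) * px (px g) t x
      + k * (px f t x + (g t x + h t)) + d * (pt g t x + h1 t) = 0
    linear_combination hsol2 + hode
end

section
/- Suppose d² − 4kρ₂ = −μ² with μ > 0. If φ = f(t,x) and ψ = g(t,x) solve the nonlinear damped Timoshenko system, then for any real ε₇, ε₈ the pair φ̃ = f, ψ̃(t,x) = g(t,x) + e^{−dt/(2ρ₂)} (ε₇ cos(μt/(2ρ₂)) + ε₈ sin(μt/(2ρ₂))) is also a solution. -/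
lemma slice_hasDerivAt (F : ℝ × ℝ → ℝ) (hF : Differentiable ℝ F) (t x : ℝ) :
    HasDerivAt (fun s => F (s, x)) (fderiv ℝ F (t, x) (1, 0)) t := by
  have h1 : HasDerivAt (fun s : ℝ => ((s, x) : ℝ × ℝ)) ((1 : ℝ), (0 : ℝ)) t :=
    (hasDerivAt_id t).prodMk (hasDerivAt_const t x)
  exact (hF (t, x)).hasFDerivAt.comp_hasDerivAt t h1

lemma pt_slice_diff (F : ℝ × ℝ → ℝ) (hF : ContDiff ℝ (⊤ : ℕ∞) F) (x : ℝ) :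
    Differentiable ℝ (fun s : ℝ => deriv (fun u => F (u, x)) s) := by
  have heq : (fun s : ℝ => deriv (fun u => F (u, x)) s)
      = fun s => fderiv ℝ F (s, x) (1, 0) := by
    funext s
    exact (slice_hasDerivAt F (hF.differentiable (by simp)) s x).deriv
  rw [heq]
  have h1 : ContDiff ℝ (⊤ : ℕ∞) (fun s : ℝ => ((s, x) : ℝ × ℝ)) := contDiff_id.prodMk contDiff_const
  have h2 : ContDiff ℝ (⊤ : ℕ∞) (fderiv ℝ F) := hF.fderiv_right (by simp)
  exact (((h2.comp h1).clm_apply contDiff_const)).differentiable (by simp)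

/-- The perturbation. -/
noncomputable def pert (d ρ₂ μ ε₇ ε₈ : ℝ) : ℝ → ℝ := fun t =>
  Real.exp (-(d * t) / (2 * ρ₂)) *
    (ε₇ * Real.cos (μ * t / (2 * ρ₂)) + ε₈ * Real.sin (μ * t / (2 * ρ₂)))

/-- First derivative of the perturbation. -/
noncomputable def pert1 (d ρ₂ μ ε₇ ε₈ : ℝ) : ℝ → ℝ := fun t =>
  Real.exp (-(d * t) / (2 * ρ₂)) *
    (-(d / (2 * ρ₂)) * (ε₇ * Real.cos (μ * t / (2 * ρ₂)) + ε₈ * Real.sin (μ * t / (2 * ρ₂)))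
      + (μ / (2 * ρ₂)) * (ε₈ * Real.cos (μ * t / (2 * ρ₂)) - ε₇ * Real.sin (μ * t / (2 * ρ₂))))

/-- Second derivative of the perturbation. -/
noncomputable def pert2 (d ρ₂ μ ε₇ ε₈ : ℝ) : ℝ → ℝ := fun t =>
  Real.exp (-(d * t) / (2 * ρ₂)) *
    (((d / (2 * ρ₂)) ^ 2 - (μ / (2 * ρ₂)) ^ 2) *
        (ε₇ * Real.cos (μ * t / (2 * ρ₂)) + ε₈ * Real.sin (μ * t / (2 * ρ₂)))
      - 2 * (d / (2 * ρ₂)) * (μ / (2 * ρ₂)) *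
        (ε₈ * Real.cos (μ * t / (2 * ρ₂)) - ε₇ * Real.sin (μ * t / (2 * ρ₂))))

lemma pert_hasDerivAt (d ρ₂ μ ε₇ ε₈ t : ℝ) :
    HasDerivAt (pert d ρ₂ μ ε₇ ε₈) (pert1 d ρ₂ μ ε₇ ε₈ t) t := by
  have hle : HasDerivAt (fun t : ℝ => -(d * t) / (2 * ρ₂)) (-(d / (2 * ρ₂))) t := by
    have := (((hasDerivAt_id t).const_mul d).neg).div_const (2 * ρ₂)
    simpa [neg_div] using this
  have hlc : HasDerivAt (fun t : ℝ => μ * t / (2 * ρ₂)) (μ / (2 * ρ₂)) t := by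
    have := ((hasDerivAt_id t).const_mul μ).div_const (2 * ρ₂)
    simpa using this
  have hE := (Real.hasDerivAt_exp (-(d * t) / (2 * ρ₂))).comp t hle
  have hC := (Real.hasDerivAt_cos (μ * t / (2 * ρ₂))).comp t hlc
  have hS := (Real.hasDerivAt_sin (μ * t / (2 * ρ₂))).comp t hlc
  have h := hE.mul ((hC.const_mul ε₇).add (hS.const_mul ε₈))
  simp only [Function.comp_def] at h
  unfold pert pert1
  refine h.congr_deriv ?_
  simp only [Pi.add_apply, Pi.sub_apply]
  ring

lemma pert1_hasDerivAt (d ρ₂ μ ε₇ ε₈ t : ℝ) :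
    HasDerivAt (pert1 d ρ₂ μ ε₇ ε₈) (pert2 d ρ₂ μ ε₇ ε₈ t) t := by
  have hle : HasDerivAt (fun t : ℝ => -(d * t) / (2 * ρ₂)) (-(d / (2 * ρ₂))) t := by
    have := (((hasDerivAt_id t).const_mul d).neg).div_const (2 * ρ₂)
    simpa [neg_div] using this
  have hlc : HasDerivAt (fun t : ℝ => μ * t / (2 * ρ₂)) (μ / (2 * ρ₂)) t := by
    have := ((hasDerivAt_id t).const_mul μ).div_const (2 * ρ₂)
    simpa using this
  have hE := (Real.hasDerivAt_exp (-(d * t) / (2 * ρ₂))).comp t hle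
  have hC := (Real.hasDerivAt_cos (μ * t / (2 * ρ₂))).comp t hlc
  have hS := (Real.hasDerivAt_sin (μ * t / (2 * ρ₂))).comp t hlc
  have h := hE.mul ((((hC.const_mul ε₇).add (hS.const_mul ε₈)).const_mul (-(d / (2 * ρ₂)))).add
    (((hC.const_mul ε₈).sub (hS.const_mul ε₇)).const_mul (μ / (2 * ρ₂))))
  simp only [Function.comp_def] at h
  unfold pert1 pert2
  refine h.congr_deriv ?_
  simp only [Pi.add_apply, Pi.sub_apply]
  ring

lemma pert_ode (d ρ₂ μ k ε₇ ε₈ : ℝ) (hρ₂ : 0 < ρ₂)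
    (hunder : d ^ 2 - 4 * k * ρ₂ = -μ ^ 2) (t : ℝ) :
    ρ₂ * pert2 d ρ₂ μ ε₇ ε₈ t + d * pert1 d ρ₂ μ ε₇ ε₈ t + k * pert d ρ₂ μ ε₇ ε₈ t = 0 := by
  have h : ρ₂ ≠ 0 := hρ₂.ne'
  have key1 : ρ₂ * ((d / (2 * ρ₂)) ^ 2 - (μ / (2 * ρ₂)) ^ 2) - d * (d / (2 * ρ₂)) + k = 0 := by
    field_simp
    linear_combination (-1) * hunder
  have key2 : ρ₂ * (2 * (d / (2 * ρ₂)) * (μ / (2 * ρ₂))) - d * (μ / (2 * ρ₂)) = 0 := by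
    field_simp; ring
  unfold pert pert1 pert2
  set E := Real.exp (-(d * t) / (2 * ρ₂))
  set C := Real.cos (μ * t / (2 * ρ₂))
  set S := Real.sin (μ * t / (2 * ρ₂))
  linear_combination (E * (ε₇ * C + ε₈ * S)) * key1 - (E * (ε₈ * C - ε₇ * S)) * key2

theorem timoshenko_X7_X8_invariance_underdamped
    (ρ₁ ρ₂ k d μ : ℝ) (hρ₁ : 0 < ρ₁) (hρ₂ : 0 < ρ₂) (hk : 0 < k) (hd : 0 < d)
    (hμ : 0 < μ) (hunder : d ^ 2 - 4 * k * ρ₂ = -μ ^ 2)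
    (χ : ℝ → ℝ) (hχ : ContDiff ℝ (⊤ : ℕ∞) χ)
    (f g : ℝ → ℝ → ℝ)
    (hf : ContDiff ℝ (⊤ : ℕ∞) (fun p : ℝ × ℝ => f p.1 p.2))
    (hg : ContDiff ℝ (⊤ : ℕ∞) (fun p : ℝ × ℝ => g p.1 p.2))
    (hsol : TimoshenkoSol ρ₁ ρ₂ k d χ f g) (ε₇ ε₈ : ℝ) :
    TimoshenkoSol ρ₁ ρ₂ k d χ f
      (fun t x => g t x + Real.exp (-(d * t) / (2 * ρ₂)) *
        (ε₇ * Real.cos (μ * t / (2 * ρ₂)) + ε₈ * Real.sin (μ * t / (2 * ρ₂)))) := by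
  show TimoshenkoSol ρ₁ ρ₂ k d χ f (fun t x => g t x + pert d ρ₂ μ ε₇ ε₈ t)
  have hGd : Differentiable ℝ (fun p : ℝ × ℝ => g p.1 p.2) := hg.differentiable (by simp)
  -- the space derivatives are unchanged
  have hpx : ∀ t x : ℝ, px (fun t x => g t x + pert d ρ₂ μ ε₇ ε₈ t) t x = px g t x := by
    intro t x
    show deriv (fun y => g t y + pert d ρ₂ μ ε₇ ε₈ t) x = deriv (fun y => g t y) x
    exact deriv_add_const _
  have hpxx : ∀ t x : ℝ,
      px (px (fun t x => g t x + pert d ρ₂ μ ε₇ ε₈ t)) t x = px (px g) t x := by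
    intro t x
    show deriv (fun y => px (fun t x => g t x + pert d ρ₂ μ ε₇ ε₈ t) t y) x
      = deriv (fun y => px g t y) x
    congr 1
    funext y
    exact hpx t y
  -- time-derivative facts
  have hsl : ∀ t x : ℝ, HasDerivAt (fun s => g s x) (pt g t x) t := by
    intro t x
    exact (slice_hasDerivAt (fun p : ℝ × ℝ => g p.1 p.2) hGd t x).differentiableAt.hasDerivAt
  have hptψ : ∀ t x : ℝ,
      pt (fun t x => g t x + pert d ρ₂ μ ε₇ ε₈ t) t x = pt g t x + pert1 d ρ₂ μ ε₇ ε₈ t := by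
    intro t x
    exact ((hsl t x).add (pert_hasDerivAt d ρ₂ μ ε₇ ε₈ t)).deriv
  have hpttψ : ∀ t x : ℝ,
      pt (pt (fun t x => g t x + pert d ρ₂ μ ε₇ ε₈ t)) t x
        = pt (pt g) t x + pert2 d ρ₂ μ ε₇ ε₈ t := by
    intro t x
    have heq : (fun s => pt (fun t x => g t x + pert d ρ₂ μ ε₇ ε₈ t) s x)
        = fun s => pt g s x + pert1 d ρ₂ μ ε₇ ε₈ s := funext fun s => hptψ s x
    show deriv (fun s => pt (fun t x => g t x + pert d ρ₂ μ ε₇ ε₈ t) s x) t = _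
    rw [heq]
    have hd2 : DifferentiableAt ℝ (fun s => pt g s x) t :=
      (pt_slice_diff (fun p : ℝ × ℝ => g p.1 p.2) hg x) t
    exact (hd2.hasDerivAt.add (pert1_hasDerivAt d ρ₂ μ ε₇ ε₈ t)).deriv
  intro t x
  refine ⟨?_, ?_⟩
  · rw [hpx t x]
    exact (hsol t x).1
  · rw [hpttψ t x, hpx t x, hpxx t x, hptψ t x]
    have h0 := (hsol t x).2
    have hode := pert_ode d ρ₂ μ k ε₇ ε₈ hρ₂ hunder t
    linear_combination h0 + hode
end

section
/- Suppose d² − 4kρ₂ = −μ² with μ > 0. If φ = f(t,x) and ψ = g(t,x) solve the nonlinear damped Timoshenko system, then for any real ε the pair φ̃(t,x) = f(t,x) + ε t x, ψ̃(t,x) = g(t,x) + ε(d/k − t) is also a solution. -/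
theorem timoshenko_X6_invariance_underdamped
    (ρ₁ ρ₂ k d μ : ℝ) (hρ₁ : 0 < ρ₁) (hρ₂ : 0 < ρ₂) (hk : 0 < k) (hd : 0 < d)
    (hμ : 0 < μ) (hunder : d ^ 2 - 4 * k * ρ₂ = -μ ^ 2)
    (χ : ℝ → ℝ) (hχ : ContDiff ℝ (⊤ : ℕ∞) χ)
    (f g : ℝ → ℝ → ℝ)
    (hf : ContDiff ℝ (⊤ : ℕ∞) (fun p : ℝ × ℝ => f p.1 p.2))
    (hg : ContDiff ℝ (⊤ : ℕ∞) (fun p : ℝ × ℝ => g p.1 p.2))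
    (hsol : TimoshenkoSol ρ₁ ρ₂ k d χ f g) (ε : ℝ) :
    TimoshenkoSol ρ₁ ρ₂ k d χ
      (fun t x => f t x + ε * t * x)
      (fun t x => g t x + ε * (d / k - t)) := by
  set F : ℝ → ℝ → ℝ := fun t x => f t x + ε * t * x with hF
  set G : ℝ → ℝ → ℝ := fun t x => g t x + ε * (d / k - t) with hG
  have hfd : Differentiable ℝ (fun p : ℝ × ℝ => f p.1 p.2) := hf.differentiable (by simp)
  have hgd : Differentiable ℝ (fun p : ℝ × ℝ => g p.1 p.2) := hg.differentiable (by simp)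
  have hft : ∀ x, Differentiable ℝ (fun s => f s x) := fun x =>
    hfd.comp (differentiable_id.prodMk (differentiable_const x))
  have hfx : ∀ t, Differentiable ℝ (fun y => f t y) := fun t =>
    hfd.comp ((differentiable_const t).prodMk differentiable_id)
  have hgt : ∀ x, Differentiable ℝ (fun s => g s x) := fun x =>
    hgd.comp (differentiable_id.prodMk (differentiable_const x))
  -- first-order derivatives of the shifted functions
  have ptφ : ∀ s y, pt F s y = pt f s y + ε * y := by
    intro s y
    show deriv (fun s => f s y + ε * s * y) s = _
    rw [deriv_fun_add ((hft y) s) (by fun_prop)]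
    congr 1
    have h1 : (fun s : ℝ => ε * s * y) = fun s : ℝ => (ε * y) * s := by ext s; ring
    rw [h1, deriv_const_mul _ differentiableAt_fun_id, deriv_id'']
    ring
  have pxφ : ∀ s y, px F s y = px f s y + ε * s := by
    intro s y
    show deriv (fun y => f s y + ε * s * y) y = _
    rw [deriv_fun_add ((hfx s) y) (by fun_prop)]
    congr 1
    rw [deriv_const_mul _ differentiableAt_fun_id, deriv_id'']
    ring
  have ptψ : ∀ s y, pt G s y = pt g s y - ε := by
    intro s y
    show deriv (fun s => g s y + ε * (d / k - s)) s = _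
    rw [deriv_fun_add ((hgt y) s) (by fun_prop)]
    have h1 : (fun s : ℝ => ε * (d / k - s)) = fun s : ℝ => (ε * (d / k)) + (-ε) * s := by
      ext s; ring
    rw [h1]
    rw [deriv_const_add, deriv_const_mul _ differentiableAt_fun_id, deriv_id'']
    show _ = pt g s y - ε
    rw [show pt g s y = deriv (fun s => g s y) s from rfl]
    ring
  have pxψ : ∀ s y, px G s y = px g s y := by
    intro s y
    show deriv (fun y => g s y + ε * (d / k - s)) y = _
    exact deriv_add_const _
  -- second-order derivatives
  have pttφ : ∀ s y, pt (pt F) s y = pt (pt f) s y := by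
    intro s y
    calc pt (pt F) s y = deriv (fun s' => pt F s' y) s := rfl
      _ = deriv (fun s' => pt f s' y + ε * y) s := by
            congr 1; ext s'; exact ptφ s' y
      _ = deriv (fun s' => pt f s' y) s := deriv_add_const _
      _ = pt (pt f) s y := rfl
  have pxxφ : ∀ s y, px (px F) s y = px (px f) s y := by
    intro s y
    calc px (px F) s y = deriv (fun y' => px F s y') y := rfl
      _ = deriv (fun y' => px f s y' + ε * s) y := by
            congr 1; ext y'; exact pxφ s y'
      _ = deriv (fun y' => px f s y') y := deriv_add_const _
      _ = px (px f) s y := rfl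
  have pttψ : ∀ s y, pt (pt G) s y = pt (pt g) s y := by
    intro s y
    calc pt (pt G) s y = deriv (fun s' => pt G s' y) s := rfl
      _ = deriv (fun s' => pt g s' y - ε) s := by
            congr 1; ext s'; exact ptψ s' y
      _ = deriv (fun s' => pt g s' y) s := deriv_sub_const _
      _ = pt (pt g) s y := rfl
  have pxxψ : ∀ s y, px (px G) s y = px (px g) s y := by
    intro s y
    calc px (px G) s y = deriv (fun y' => px G s y') y := rfl
      _ = deriv (fun y' => px g s y') y := by
            congr 1; ext y'; exact pxψ s y'
      _ = px (px g) s y := rfl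
  intro t x
  obtain ⟨h1, h2⟩ := hsol t x
  constructor
  · rw [pttφ, pxxφ, pxψ]
    exact h1
  · rw [pttψ, pxxψ, pxψ, pxφ, ptψ]
    have hGval : G t x = g t x + ε * (d / k - t) := rfl
    rw [hGval]
    have hkd : k * (ε * (d / k)) = ε * d := by
      field_simp
    nlinarith [h2, hkd]
end

section
/- Consider the vector fields on ℝ⁴ (coordinates t, x, φ, ψ) given by X₁ = ∂_t, X₂ = ∂_x, X₃ = ∂_φ, X₄ = t∂_φ, X₅ = x∂_φ − ∂_ψ, X₆ = tx∂_φ + (2√(ρ₂/k) − t)∂_ψ, X₇ = e^{−√(k/ρ₂)t}∂_ψ, X₈ = t e^{−√(k/ρ₂)t}∂_ψ. Then [X₁,X₄] = X₃, [X₁,X₆] = X₅, [X₁,X₇] = −√(k/ρ₂) X₇, [X₁,X₈] = X₇ − √(k/ρ₂) X₈, [X₂,X₅] = X₃, [X₂,X₆] = X₄, and all other commutators [Xᵢ,Xⱼ] with i < j vanish. In particular, the span of X₁,…,X₈ is a Lie subalgebra of vector fields on ℝ⁴. -/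
/-!
Write `(t, x, φ, ψ)` for the coordinates. `X₁ = ∂_t` and `X₂ = ∂_x` are constant, so `[X₁, W]` and
`[X₂, W]` are the partial derivatives `∂_t W` and `∂_x W`, which one computes along coordinate
lines; they map every `Xⱼ` into the span. The remaining fields `X₃, …, X₈` only point in the
`φ, ψ` directions while their coefficients only depend on `t, x`, so each of them is constant
along the straight lines traced by another one, and all their mutual brackets vanish.
-/

/-- The Lie bracket of vector fields on ℝ⁴ (identified with smooth maps ℝ⁴ → ℝ⁴):
`[V,W] = (DW)V − (DV)W`. -/
noncomputable def vfBracket (V W : (Fin 4 → ℝ) → Fin 4 → ℝ) : (Fin 4 → ℝ) → Fin 4 → ℝ :=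
  fun p => fderiv ℝ W p (V p) - fderiv ℝ V p (W p)

open VectorField Real Submodule

section LieBracket

variable {𝕜 E F : Type*} [NontriviallyNormedField 𝕜] [NormedAddCommGroup E] [NormedSpace 𝕜 E]
  [NormedAddCommGroup F] [NormedSpace 𝕜 F] {f : E → F} {x v : E}

theorem fderiv_apply_eq_of_hasLineDerivAt {w : F} (hf : DifferentiableAt 𝕜 f x)
    (h : HasLineDerivAt 𝕜 f w x v) : fderiv 𝕜 f x v = w :=
  hf.lineDeriv_eq_fderiv.symm.trans h.lineDeriv

theorem fderiv_apply_eq_zero_of_forall_add_smul_eq (h : ∀ s : 𝕜, f (x + s • v) = f x) :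
    fderiv 𝕜 f x v = 0 := by
  by_cases hf : DifferentiableAt 𝕜 f x
  · refine fderiv_apply_eq_of_hasLineDerivAt hf ?_
    simpa only [HasLineDerivAt, h] using hasDerivAt_const (0 : 𝕜) (f x)
  · simp [fderiv_zero_of_not_differentiableAt hf]

theorem lieBracket_const_left (e : E) (W : E → E) :
    lieBracket 𝕜 (fun _ => e) W x = fderiv 𝕜 W x e := by
  simp [lieBracket_eq]

theorem lieBracket_eq_zero_of_forall_add_smul_eq {V W : E → E}
    (hW : ∀ s : 𝕜, W (x + s • V x) = W x) (hV : ∀ s : 𝕜, V (x + s • W x) = V x) :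
    lieBracket 𝕜 V W x = 0 := by
  simp [lieBracket_eq, fderiv_apply_eq_zero_of_forall_add_smul_eq hW,
    fderiv_apply_eq_zero_of_forall_add_smul_eq hV]

end LieBracket

theorem vfBracket_eq_lieBracket (V W : (Fin 4 → ℝ) → Fin 4 → ℝ) :
    vfBracket V W = lieBracket ℝ V W := rfl

/-- The field with index `i` is `X_{i+1}`; the theorem takes `c = √(k/ρ₂)` and `a = 2√(ρ₂/k)`. -/
noncomputable def timoshenkoField (c a : ℝ) : Fin 8 → (Fin 4 → ℝ) → Fin 4 → ℝ :=
  ![fun _ => ![1, 0, 0, 0], fun _ => ![0, 1, 0, 0], fun _ => ![0, 0, 1, 0],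
    fun p => ![0, 0, p 0, 0], fun p => ![0, 0, p 1, -1], fun p => ![0, 0, p 0 * p 1, a - p 0],
    fun p => ![0, 0, 0, exp (-c * p 0)], fun p => ![0, 0, 0, p 0 * exp (-c * p 0)]]

namespace timoshenkoField

variable (c a : ℝ)

local notation "X" => timoshenkoField c a

theorem differentiable (i : Fin 8) : Differentiable ℝ (X i) := by
  -- `fun_prop` handles `Fin.cons`, but not its synonym `Matrix.vecCons`
  fin_cases i <;> simp [timoshenkoField] <;> simp only [Matrix.vecCons] <;> fun_prop

theorem apply_eq_apply_of_t_x_eq (i : Fin 8) {p q : Fin 4 → ℝ} (h0 : p 0 = q 0)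
    (h1 : p 1 = q 1) : X i p = X i q := by
  fin_cases i <;> simp [timoshenkoField, h0, h1]

theorem apply_zero_eq_zero_and_apply_one_eq_zero {i : Fin 8} (hi : 2 ≤ i) (p : Fin 4 → ℝ) :
    X i p 0 = 0 ∧ X i p 1 = 0 := by
  fin_cases i <;> simp_all [timoshenkoField]

theorem apply_add_smul_apply_of_two_le {i : Fin 8} (hi : 2 ≤ i) (j : Fin 8) (p : Fin 4 → ℝ)
    (s : ℝ) : X j (p + s • X i p) = X j p := by
  obtain ⟨h0, h1⟩ := apply_zero_eq_zero_and_apply_one_eq_zero c a hi p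
  exact apply_eq_apply_of_t_x_eq c a j (by simp [h0]) (by simp [h1])

theorem hasLineDerivAt_dt (j : Fin 8) (p : Fin 4 → ℝ) :
    HasLineDerivAt ℝ (X j)
      ((![0, 0, 0, X 2, 0, X 4, (-c) • X 6, X 6 - c • X 7] : Fin 8 → _) j p) p ![1, 0, 0, 0] := by
  rw [HasLineDerivAt, hasDerivAt_pi]
  intro i
  fin_cases j <;> fin_cases i <;> simp [timoshenkoField, Matrix.vecHead, Matrix.vecTail] <;>
    exact (DifferentiableAt.hasDerivAt (by fun_prop)).congr_deriv
      (by simp (disch := fun_prop) <;> ring)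

theorem hasLineDerivAt_dx (j : Fin 8) (p : Fin 4 → ℝ) :
    HasLineDerivAt ℝ (X j) ((![0, 0, 0, 0, X 2, X 3, 0, 0] : Fin 8 → _) j p) p ![0, 1, 0, 0] := by
  rw [HasLineDerivAt, hasDerivAt_pi]
  intro i
  fin_cases j <;> fin_cases i <;> simp [timoshenkoField, Matrix.vecHead, Matrix.vecTail] <;>
    exact (DifferentiableAt.hasDerivAt (by fun_prop)).congr_deriv (by simp (disch := fun_prop))

theorem lieBracket_dt_left (j : Fin 8) :
    lieBracket ℝ (X 0) (X j) = (![0, 0, 0, X 2, 0, X 4, (-c) • X 6, X 6 - c • X 7] : Fin 8 → _) j :=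
  funext fun p => (lieBracket_const_left _ _).trans <|
    fderiv_apply_eq_of_hasLineDerivAt (differentiable c a j p) (hasLineDerivAt_dt c a j p)

theorem lieBracket_dx_left (j : Fin 8) :
    lieBracket ℝ (X 1) (X j) = (![0, 0, 0, 0, X 2, X 3, 0, 0] : Fin 8 → _) j :=
  funext fun p => (lieBracket_const_left _ _).trans <|
    fderiv_apply_eq_of_hasLineDerivAt (differentiable c a j p) (hasLineDerivAt_dx c a j p)

theorem lieBracket_eq_zero_of_two_le {i j : Fin 8} (hi : 2 ≤ i) (hj : 2 ≤ j) :
    lieBracket ℝ (X i) (X j) = 0 :=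
  funext fun p => lieBracket_eq_zero_of_forall_add_smul_eq
    (apply_add_smul_apply_of_two_le c a hi j p) (apply_add_smul_apply_of_two_le c a hj i p)

theorem lieBracket_mem_span (i j : Fin 8) :
    lieBracket ℝ (X i) (X j) ∈ span ℝ (Set.range X) := by
  have mem : ∀ k, X k ∈ span ℝ (Set.range X) := fun k => subset_span ⟨k, rfl⟩
  have swap : ∀ V W : (Fin 4 → ℝ) → Fin 4 → ℝ, lieBracket ℝ V W = -lieBracket ℝ W V :=
    fun V W => funext fun _ => lieBracket_swap
  have dt_mem : ∀ j, lieBracket ℝ (X 0) (X j) ∈ span ℝ (Set.range X) := by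
    intro j
    rw [lieBracket_dt_left]
    fin_cases j <;> simp [mem, smul_mem, sub_mem]
  have dx_mem : ∀ j, lieBracket ℝ (X 1) (X j) ∈ span ℝ (Set.range X) := by
    intro j
    rw [lieBracket_dx_left]
    fin_cases j <;> simp [mem]
  obtain rfl | rfl | hi : i = 0 ∨ i = 1 ∨ 2 ≤ i := by omega
  · exact dt_mem j
  · exact dx_mem j
  obtain rfl | rfl | hj : j = 0 ∨ j = 1 ∨ 2 ≤ j := by omega
  · rw [swap]
    exact neg_mem (dt_mem i)
  · rw [swap]
    exact neg_mem (dx_mem i)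
  · simp [lieBracket_eq_zero_of_two_le c a hi hj, zero_mem]

end timoshenkoField

open timoshenkoField in
theorem timoshenko_symmetry_vector_fields_commutators_general
    (ρ₂ k : ℝ)
    (X : Fin 8 → (Fin 4 → ℝ) → Fin 4 → ℝ)
    (hX1 : X 0 = fun _ => ![1, 0, 0, 0])
    (hX2 : X 1 = fun _ => ![0, 1, 0, 0])
    (hX3 : X 2 = fun _ => ![0, 0, 1, 0])
    (hX4 : X 3 = fun p => ![0, 0, p 0, 0])
    (hX5 : X 4 = fun p => ![0, 0, p 1, -1])
    (hX6 : X 5 = fun p => ![0, 0, p 0 * p 1, 2 * Real.sqrt (ρ₂ / k) - p 0])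
    (hX7 : X 6 = fun p => ![0, 0, 0, Real.exp (-Real.sqrt (k / ρ₂) * p 0)])
    (hX8 : X 7 = fun p => ![0, 0, 0, p 0 * Real.exp (-Real.sqrt (k / ρ₂) * p 0)]) :
    vfBracket (X 0) (X 3) = X 2 ∧
    vfBracket (X 0) (X 5) = X 4 ∧
    vfBracket (X 0) (X 6) = (-Real.sqrt (k / ρ₂)) • X 6 ∧
    vfBracket (X 0) (X 7) = X 6 - Real.sqrt (k / ρ₂) • X 7 ∧
    vfBracket (X 1) (X 4) = X 2 ∧
    vfBracket (X 1) (X 5) = X 3 ∧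
    (∀ i j : Fin 8, i < j →
      (i, j) ∉ ({(0, 3), (0, 5), (0, 6), (0, 7), (1, 4), (1, 5)} : Set (Fin 8 × Fin 8)) →
      vfBracket (X i) (X j) = 0) ∧
    (∀ i j : Fin 8, vfBracket (X i) (X j) ∈ Submodule.span ℝ (Set.range X)) := by
  obtain rfl : X = timoshenkoField (√(k / ρ₂)) (2 * √(ρ₂ / k)) := by
    funext i
    fin_cases i
    exacts [hX1, hX2, hX3, hX4, hX5, hX6, hX7, hX8]
  simp only [vfBracket_eq_lieBracket]
  refine ⟨lieBracket_dt_left _ _ 3, lieBracket_dt_left _ _ 5, lieBracket_dt_left _ _ 6,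
    lieBracket_dt_left _ _ 7, lieBracket_dx_left _ _ 4, lieBracket_dx_left _ _ 5, ?_,
    lieBracket_mem_span _ _⟩
  intro i j hij hij'
  obtain rfl | rfl | hi : i = 0 ∨ i = 1 ∨ 2 ≤ i := by omega
  · rw [lieBracket_dt_left]
    fin_cases j <;> first | rfl | simp at hij hij'
  · rw [lieBracket_dx_left]
    fin_cases j <;> first | rfl | simp at hij hij'
  · exact lieBracket_eq_zero_of_two_le _ _ hi (hi.trans hij.le)

theorem timoshenko_symmetry_vector_fields_commutators
    (ρ₂ k : ℝ) (hρ₂ : 0 < ρ₂) (hk : 0 < k)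
    (X : Fin 8 → (Fin 4 → ℝ) → Fin 4 → ℝ)
    (hX1 : X 0 = fun _ => ![1, 0, 0, 0])
    (hX2 : X 1 = fun _ => ![0, 1, 0, 0])
    (hX3 : X 2 = fun _ => ![0, 0, 1, 0])
    (hX4 : X 3 = fun p => ![0, 0, p 0, 0])
    (hX5 : X 4 = fun p => ![0, 0, p 1, -1])
    (hX6 : X 5 = fun p => ![0, 0, p 0 * p 1, 2 * Real.sqrt (ρ₂ / k) - p 0])
    (hX7 : X 6 = fun p => ![0, 0, 0, Real.exp (-Real.sqrt (k / ρ₂) * p 0)])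
    (hX8 : X 7 = fun p => ![0, 0, 0, p 0 * Real.exp (-Real.sqrt (k / ρ₂) * p 0)]) :
    vfBracket (X 0) (X 3) = X 2 ∧
    vfBracket (X 0) (X 5) = X 4 ∧
    vfBracket (X 0) (X 6) = (-Real.sqrt (k / ρ₂)) • X 6 ∧
    vfBracket (X 0) (X 7) = X 6 - Real.sqrt (k / ρ₂) • X 7 ∧
    vfBracket (X 1) (X 4) = X 2 ∧
    vfBracket (X 1) (X 5) = X 3 ∧
    (∀ i j : Fin 8, i < j →
      (i, j) ∉ ({(0, 3), (0, 5), (0, 6), (0, 7), (1, 4), (1, 5)} : Set (Fin 8 × Fin 8)) →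
      vfBracket (X i) (X j) = 0) ∧
    (∀ i j : Fin 8, vfBracket (X i) (X j) ∈ Submodule.span ℝ (Set.range X)) :=
  timoshenko_symmetry_vector_fields_commutators_general ρ₂ k X hX1 hX2 hX3 hX4 hX5 hX6 hX7 hX8
end

section
/- Let ρ₁, ρ₂, k, d > 0 with d² = 4kρ₂, let α, β, γ ∈ ℝ, and suppose Z, W : ℝ → ℝ satisfy ρ₁ Z'' − k(γζ + β)e^{−dζ/(2ρ₂)} − αd = 0 and ρ₂ W'' + dW' + kW = 0. Then φ(t,x) = Z(t) + (α/2)tx² and ψ(t,x) = W(t) + αx(d/k − t) + x(β + γt)e^{−dt/(2ρ₂)} solve the nonlinear damped Timoshenko system ρ₁ φ_tt − k(φ_xx + ψ_x) = 0, ρ₂ ψ_tt − χ'(ψ_x)ψ_xx + k(φ_x + ψ) + dψ_t = 0 for any smooth χ. -/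
theorem timoshenko_reduction_X3_critical
    (ρ₁ ρ₂ k d : ℝ) (hρ₁ : 0 < ρ₁) (hρ₂ : 0 < ρ₂) (hk : 0 < k) (hd : 0 < d)
    (hcrit : d ^ 2 = 4 * k * ρ₂)
    (χ : ℝ → ℝ) (hχ : ContDiff ℝ (⊤ : ℕ∞) χ)
    (α β γ : ℝ) (Z W : ℝ → ℝ)
    (hZ : ContDiff ℝ 2 Z) (hW : ContDiff ℝ 2 W)
    (hZode : ∀ ζ : ℝ, ρ₁ * deriv (deriv Z) ζ
      - k * (γ * ζ + β) * Real.exp (-(d * ζ) / (2 * ρ₂)) - α * d = 0)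
    (hWode : ∀ ζ : ℝ, ρ₂ * deriv (deriv W) ζ + d * deriv W ζ + k * W ζ = 0) :
    TimoshenkoSol ρ₁ ρ₂ k d χ
      (fun t x => Z t + α / 2 * t * x ^ 2)
      (fun t x => W t + α * x * (d / k - t)
        + x * (β + γ * t) * Real.exp (-(d * t) / (2 * ρ₂))) := by
  have hρ₂0 : ρ₂ ≠ 0 := hρ₂.ne'
  have hk0 : k ≠ 0 := hk.ne'
  set e : ℝ → ℝ := fun s => Real.exp (-(d * s) / (2 * ρ₂)) with he
  -- derivative of the exponential factor
  have hEd : ∀ s : ℝ, HasDerivAt e (e s * (-d / (2 * ρ₂))) s := by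
    intro s
    have hfun : (fun s : ℝ => -(d * s) / (2 * ρ₂)) = fun s : ℝ => -d / (2 * ρ₂) * s := by
      funext y; ring
    have hinner : HasDerivAt (fun s : ℝ => -(d * s) / (2 * ρ₂)) (-d / (2 * ρ₂)) s := by
      rw [hfun]; simpa using (hasDerivAt_id s).const_mul (-d / (2 * ρ₂))
    simpa [he] using hinner.exp
  -- smoothness of Z, W
  have hZ' : ContDiff ℝ ((1:ℕ∞)+1) Z := by exact_mod_cast hZ
  have hW' : ContDiff ℝ ((1:ℕ∞)+1) W := by exact_mod_cast hW
  have hZd : Differentiable ℝ Z := (contDiff_succ_iff_deriv.mp hZ').1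
  have hZ1 : Differentiable ℝ (deriv Z) :=
    ((contDiff_succ_iff_deriv.mp hZ').2.2).differentiable (by simp)
  have hWd : Differentiable ℝ W := (contDiff_succ_iff_deriv.mp hW').1
  have hW1 : Differentiable ℝ (deriv W) :=
    ((contDiff_succ_iff_deriv.mp hW').2.2).differentiable (by simp)
  intro t x
  constructor
  · -- first equation
    -- pt φ
    have hptφ : ∀ s : ℝ,
        pt (fun t x => Z t + α / 2 * t * x ^ 2) s x = deriv Z s + α / 2 * x ^ 2 := by
      intro s
      have h : HasDerivAt (fun u : ℝ => Z u + α / 2 * u * x ^ 2)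
          (deriv Z s + α / 2 * 1 * x ^ 2) s :=
        (hZd s).hasDerivAt.add (((hasDerivAt_id s).const_mul (α / 2)).mul_const (x ^ 2))
      simp only [pt]
      rw [h.deriv]; ring
    have hpttφ : pt (pt (fun t x => Z t + α / 2 * t * x ^ 2)) t x = deriv (deriv Z) t := by
      simp only [pt]
      have hfun : (fun s : ℝ => pt (fun t x => Z t + α / 2 * t * x ^ 2) s x)
          = fun s => deriv Z s + α / 2 * x ^ 2 := funext hptφ
      simp only [pt] at hfun
      rw [hfun]
      have h : HasDerivAt (fun s : ℝ => deriv Z s + α / 2 * x ^ 2)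
          (deriv (deriv Z) t) t := by
        simpa using ((hZ1 t).hasDerivAt).add_const (α / 2 * x ^ 2)
      exact h.deriv
    -- px φ and px px φ
    have hpxφ : ∀ y : ℝ,
        px (fun t x => Z t + α / 2 * t * x ^ 2) t y = α * t * y := by
      intro y
      have h : HasDerivAt (fun v : ℝ => Z t + α / 2 * t * v ^ 2)
          (α / 2 * t * (2 * y ^ 1)) y := by
        exact ((hasDerivAt_pow 2 y).const_mul (α / 2 * t)).const_add (Z t)
      simp only [px]
      rw [h.deriv]; ring
    have hpxxφ : px (px (fun t x => Z t + α / 2 * t * x ^ 2)) t x = α * t := by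
      simp only [px]
      have hfun : (fun y : ℝ => px (fun t x => Z t + α / 2 * t * x ^ 2) t y)
          = fun y => α * t * y := funext hpxφ
      simp only [px] at hfun
      rw [hfun]
      simpa using ((hasDerivAt_id x).const_mul (α * t)).deriv
    -- px ψ
    have hpxψ : ∀ y : ℝ,
        px (fun t x => W t + α * x * (d / k - t) + x * (β + γ * t) * e t) t y
          = α * (d / k - t) + (β + γ * t) * e t := by
      intro y
      have hfun : (fun v : ℝ => W t + α * v * (d / k - t) + v * (β + γ * t) * e t)
          = fun v => W t + (α * (d / k - t) + (β + γ * t) * e t) * v := by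
        funext v; ring
      simp only [px]
      rw [hfun]
      simpa using (((hasDerivAt_id y).const_mul
        (α * (d / k - t) + (β + γ * t) * e t)).const_add (W t)).deriv
    rw [hpttφ, hpxxφ, hpxψ x]
    have hz := hZode t
    simp only [he]
    generalize Real.exp (-(d * t) / (2 * ρ₂)) = E at hz ⊢
    field_simp
    linear_combination hz
  · -- second equation
    -- px ψ is constant in x, so px px ψ = 0
    have hpxψ : ∀ y : ℝ,
        px (fun t x => W t + α * x * (d / k - t) + x * (β + γ * t) * e t) t y
          = α * (d / k - t) + (β + γ * t) * e t := by
      intro y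
      have hfun : (fun v : ℝ => W t + α * v * (d / k - t) + v * (β + γ * t) * e t)
          = fun v => W t + (α * (d / k - t) + (β + γ * t) * e t) * v := by
        funext v; ring
      simp only [px]
      rw [hfun]
      simpa using (((hasDerivAt_id y).const_mul
        (α * (d / k - t) + (β + γ * t) * e t)).const_add (W t)).deriv
    have hpxxψ : px (px (fun t x => W t + α * x * (d / k - t) + x * (β + γ * t) * e t)) t x
        = 0 := by
      simp only [px]
      have hfun : (fun y : ℝ =>
          px (fun t x => W t + α * x * (d / k - t) + x * (β + γ * t) * e t) t y)
          = fun _ => α * (d / k - t) + (β + γ * t) * e t := funext hpxψ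
      simp only [px] at hfun
      rw [hfun]
      exact deriv_const x _
    -- px φ
    have hpxφ : px (fun t x => Z t + α / 2 * t * x ^ 2) t x = α * t * x := by
      have h : HasDerivAt (fun v : ℝ => Z t + α / 2 * t * v ^ 2)
          (α / 2 * t * (2 * x ^ 1)) x :=
        ((hasDerivAt_pow 2 x).const_mul (α / 2 * t)).const_add (Z t)
      simp only [px]
      rw [h.deriv]; ring
    -- pt ψ
    have hptψ : ∀ s : ℝ,
        pt (fun t x => W t + α * x * (d / k - t) + x * (β + γ * t) * e t) s x
          = deriv W s - α * x
            + (x * γ * e s + x * (β + γ * s) * (e s * (-d / (2 * ρ₂)))) := by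
      intro s
      have h1 : HasDerivAt (fun u : ℝ => α * x * (d / k - u)) (α * x * (0 - 1)) s :=
        ((hasDerivAt_const s (d / k)).sub (hasDerivAt_id s)).const_mul (α * x)
      have h2a : HasDerivAt (fun u : ℝ => x * (β + γ * u)) (x * γ) s := by
        simpa using (((hasDerivAt_id s).const_mul γ).const_add β).const_mul x
      have h2 : HasDerivAt (fun u : ℝ => x * (β + γ * u) * e u)
          (x * γ * e s + x * (β + γ * s) * (e s * (-d / (2 * ρ₂)))) s :=
        h2a.mul (hEd s)
      have h : HasDerivAt (fun u : ℝ => W u + α * x * (d / k - u) + x * (β + γ * u) * e u)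
          (deriv W s + α * x * (0 - 1)
            + (x * γ * e s + x * (β + γ * s) * (e s * (-d / (2 * ρ₂))))) s :=
        ((hWd s).hasDerivAt.add h1).add h2
      simp only [pt]
      rw [h.deriv]; ring
    -- pt pt ψ
    have hpttψ :
        pt (pt (fun t x => W t + α * x * (d / k - t) + x * (β + γ * t) * e t)) t x
          = deriv (deriv W) t
            + (x * γ * (e t * (-d / (2 * ρ₂)))
              + (x * γ * (e t * (-d / (2 * ρ₂)))
                + x * (β + γ * t) * (e t * (-d / (2 * ρ₂)) * (-d / (2 * ρ₂))))) := by
      simp only [pt]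
      have hfun : (fun s : ℝ =>
          pt (fun t x => W t + α * x * (d / k - t) + x * (β + γ * t) * e t) s x)
          = fun s => deriv W s - α * x
            + (x * γ * e s + x * (β + γ * s) * (e s * (-d / (2 * ρ₂)))) := funext hptψ
      simp only [pt] at hfun
      rw [hfun]
      have hA : HasDerivAt (fun s : ℝ => deriv W s - α * x)
          (deriv (deriv W) t) t := by
        simpa using ((hW1 t).hasDerivAt).sub_const (α * x)
      have hB1 : HasDerivAt (fun s : ℝ => x * γ * e s)
          (x * γ * (e t * (-d / (2 * ρ₂)))) t := by
        simpa [mul_comm] using (hEd t).const_mul (x * γ)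
      have hB2a : HasDerivAt (fun u : ℝ => x * (β + γ * u)) (x * γ) t := by
        simpa using (((hasDerivAt_id t).const_mul γ).const_add β).const_mul x
      have hB2b : HasDerivAt (fun s : ℝ => e s * (-d / (2 * ρ₂)))
          (e t * (-d / (2 * ρ₂)) * (-d / (2 * ρ₂))) t := (hEd t).mul_const _
      have hB2 : HasDerivAt (fun s : ℝ => x * (β + γ * s) * (e s * (-d / (2 * ρ₂))))
          (x * γ * (e t * (-d / (2 * ρ₂)))
            + x * (β + γ * t) * (e t * (-d / (2 * ρ₂)) * (-d / (2 * ρ₂)))) t :=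
        hB2a.mul hB2b
      exact (hA.add (hB1.add hB2)).deriv
    rw [hpttψ, hpxxψ, hpxφ, hpxψ x, hptψ t]
    have hw := hWode t
    simp only [he]
    generalize Real.exp (-(d * t) / (2 * ρ₂)) = E
    field_simp
    linear_combination 4 * ρ₂ * hw
      + (-x * (β + γ * t) * E) * hcrit
end

section
/- Let ρ₁, ρ₂, k > 0, α ∈ ℝ, and suppose Z'' = 0 and ρ₂ W'' + dW' + kW = 0 with d > 0. Then φ(t,x) = Z(t) + (α/2)x² and ψ(t,x) = W(t) − αx solve the nonlinear damped Timoshenko system ρ₁ φ_tt − k(φ_xx + ψ_x) = 0, ρ₂ ψ_tt − χ'(ψ_x)ψ_xx + k(φ_x + ψ) + dψ_t = 0 for any smooth χ : ℝ → ℝ. -/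
theorem timoshenko_reduction_X8
    (ρ₁ ρ₂ k d : ℝ) (hρ₁ : 0 < ρ₁) (hρ₂ : 0 < ρ₂) (hk : 0 < k) (hd : 0 < d)
    (χ : ℝ → ℝ) (hχ : ContDiff ℝ (⊤ : ℕ∞) χ)
    (α : ℝ) (Z W : ℝ → ℝ)
    (hZ : ContDiff ℝ 2 Z) (hW : ContDiff ℝ 2 W)
    (hZode : ∀ ζ : ℝ, deriv (deriv Z) ζ = 0)
    (hWode : ∀ ζ : ℝ, ρ₂ * deriv (deriv W) ζ + d * deriv W ζ + k * W ζ = 0) :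
    TimoshenkoSol ρ₁ ρ₂ k d χ
      (fun t x => Z t + α / 2 * x ^ 2)
      (fun t x => W t - α * x) := by
  have hZd : Differentiable ℝ Z := hZ.differentiable (by norm_num)
  have hWd : Differentiable ℝ W := hW.differentiable (by norm_num)
  intro t x
  have hptφ : pt (fun t x => Z t + α / 2 * x ^ 2) = fun t x => deriv Z t := by
    funext s y
    simp [pt, deriv_add_const]
  have hptψ : pt (fun t x => W t - α * x) = fun t x => deriv W t := by
    funext s y
    simp [pt, deriv_sub_const]
  constructor
  · have h1 : pt (pt (fun t x => Z t + α / 2 * x ^ 2)) t x = 0 := by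
      rw [hptφ]; simp [pt, hZode t]
    have h2 : px (px (fun t x => Z t + α / 2 * x ^ 2)) t x = α := by
      have : px (fun t x => Z t + α / 2 * x ^ 2) = fun t x => α * x := by
        funext s y
        simp only [px]
        rw [deriv_const_add]
        have h : HasDerivAt (fun y : ℝ => α / 2 * y ^ 2) (α / 2 * (2 * y)) y := by
          simpa using (hasDerivAt_pow 2 y).const_mul (α / 2)
        rw [h.deriv]; ring
      rw [this]
      simp only [px]
      have h : HasDerivAt (fun y : ℝ => α * y) α x := by
        simpa using (hasDerivAt_id x).const_mul α
      rw [h.deriv]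
    have h3 : px (fun t x => W t - α * x) t x = -α := by
      simp only [px]
      rw [show (fun y : ℝ => W t - α * y) = fun y => W t - α * y from rfl]
      have : HasDerivAt (fun y : ℝ => W t - α * y) (-α) x := by
        simpa using ((hasDerivAt_id x).const_mul α).const_sub (W t)
      rw [this.deriv]
    rw [h1, h2, h3]; ring
  · have h4 : pt (pt (fun t x => W t - α * x)) t x = deriv (deriv W) t := by
      rw [hptψ]; simp [pt]
    have h5 : px (fun t x => W t - α * x) t x = -α := by
      simp only [px]
      have : HasDerivAt (fun y : ℝ => W t - α * y) (-α) x := by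
        simpa using ((hasDerivAt_id x).const_mul α).const_sub (W t)
      rw [this.deriv]
    have h6 : px (px (fun t x => W t - α * x)) t x = 0 := by
      have : px (fun t x => W t - α * x) = fun t x => -α := by
        funext s y
        simp only [px]
        have : HasDerivAt (fun y : ℝ => W s - α * y) (-α) y := by
          simpa using ((hasDerivAt_id y).const_mul α).const_sub (W s)
        rw [this.deriv]
      rw [this]; simp [px]
    have h7 : px (fun t x => Z t + α / 2 * x ^ 2) t x = α * x := by
      simp only [px]
      rw [deriv_const_add]
      have h : HasDerivAt (fun y : ℝ => α / 2 * y ^ 2) (α / 2 * (2 * x)) x := by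
        simpa using (hasDerivAt_pow 2 x).const_mul (α / 2)
      rw [h.deriv]; ring
    have h8 : pt (fun t x => W t - α * x) t x = deriv W t := by rw [hptψ]
    rw [h4, h5, h6, h7, h8]
    have := hWode t
    ring_nf
    ring_nf at this
    linarith
end
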